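/- For a graph with D = d and d+1 distinct eigenvalues, the average number of shortest d-paths between vertices at distance d satisfies ā_d^{(d)} = 1/ω_d = π_0/n unconditionally, where ω_d = n/π_0 is the leading coefficient of the Hoffman polynomial. -/

import Mathlib

/-!
Walks of length `k < dist u v` from `u` to `v` do not exist, so in `p(A)` the `(u, v)` entry only
sees the top coefficient of `p` once `deg p ≤ dist u v`. Applied to the Hoffman polynomial
`H(A) = J` of degree `d`, this gives `(A^d)_{uv} = 1/ω_d` whenever `∂(u, v) = d`, so
`A^d ∘ A_d = (1/ω_d) A_d` and `⟨A^d, A_d⟩ = (1/ω_d) ‖A_d‖²`, with `‖A_d‖² ≠ 0` because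
some pair of vertices realizes the diameter.
-/

open Matrix Polynomial Finset

/-- The distance-`i` matrix of a graph on `Fin n`. -/
noncomputable def distMatrix {n : ℕ} (G : SimpleGraph (Fin n)) (i : ℕ) :
    Matrix (Fin n) (Fin n) ℝ :=
  Matrix.of fun u v => if G.dist u v = i then 1 else 0

/-- The 0-1 matrix of pairs at distance at most `i` (`S_i`). -/
noncomputable def ballMatrix {n : ℕ} (G : SimpleGraph (Fin n)) (i : ℕ) :
    Matrix (Fin n) (Fin n) ℝ :=
  Matrix.of fun u v => if G.dist u v ≤ i then 1 else 0

/-- The normalized trace inner product `⟨R,S⟩ = (1/n) tr (R S)`. -/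
noncomputable def ip {n : ℕ} (R S : Matrix (Fin n) (Fin n) ℝ) : ℝ :=
  (1 / (n : ℝ)) * (R * S).trace

/-- Average crossed local multiplicity `m̄_{ij} = ⟨E_j, A_i⟩ / ‖A_i‖²`. -/
noncomputable def mbar {n : ℕ} (G : SimpleGraph (Fin n)) (E : Matrix (Fin n) (Fin n) ℝ)
    (i : ℕ) : ℝ :=
  ip E (distMatrix G i) / ip (distMatrix G i) (distMatrix G i)

namespace SimpleGraph

variable {V R : Type*} [Fintype V] [DecidableEq V] (G : SimpleGraph V) [DecidableRel G.Adj]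

lemma adjMatrix_pow_apply_eq_zero_of_lt_dist [Semiring R] {u v : V} {k : ℕ}
    (hk : k < G.dist u v) : (G.adjMatrix R ^ k) u v = 0 := by
  have : IsEmpty {p : G.Walk u v | p.length = k} :=
    ⟨fun ⟨p, (hp : p.length = k)⟩ => absurd (G.dist_le p) (by omega)⟩
  rw [adjMatrix_pow_apply_eq_card_walk, Fintype.card_eq_zero, Nat.cast_zero]

lemma aeval_adjMatrix_apply_of_natDegree_le_dist [CommSemiring R] {u v : V} {p : R[X]}
    (hp : p.natDegree ≤ G.dist u v) :
    aeval (G.adjMatrix R) p u v = p.coeff (G.dist u v) * (G.adjMatrix R ^ G.dist u v) u v := by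
  rw [aeval_eq_sum_range' (Nat.lt_succ_of_le hp), Finset.sum_range_succ, Matrix.add_apply,
    Matrix.sum_apply, Finset.sum_eq_zero, zero_add, Matrix.smul_apply, smul_eq_mul]
  intro k hk
  rw [Matrix.smul_apply, G.adjMatrix_pow_apply_eq_zero_of_lt_dist (Finset.mem_range.mp hk),
    smul_zero]

lemma adjMatrix_pow_dist_apply_of_aeval_eq_allOnes [Field R] {u v : V} {H : R[X]}
    (hHdeg : H.natDegree = G.dist u v)
    (hH : aeval (G.adjMatrix R) H = Matrix.of fun _ _ => (1 : R)) :
    (G.adjMatrix R ^ G.dist u v) u v = H.leadingCoeff⁻¹ := by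
  have hentry := G.aeval_adjMatrix_apply_of_natDegree_le_dist hHdeg.le (u := u) (v := v)
  rw [hH, ← hHdeg, coeff_natDegree, hHdeg, Matrix.of_apply] at hentry
  exact eq_inv_of_mul_eq_one_right hentry.symm

end SimpleGraph

section DistanceMatrices

variable {n : ℕ} (G : SimpleGraph (Fin n))

lemma trace_mul_distMatrix (M : Matrix (Fin n) (Fin n) ℝ) (i : ℕ) :
    (M * distMatrix G i).trace = ∑ u, ∑ v, if G.dist u v = i then M u v else 0 := by
  simp only [Matrix.trace, Matrix.diag, Matrix.mul_apply, distMatrix, Matrix.of_apply,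
    G.dist_comm, mul_ite, mul_one, mul_zero]

lemma ip_distMatrix_of_apply_eq {M : Matrix (Fin n) (Fin n) ℝ} {i : ℕ} {c : ℝ}
    (hM : ∀ u v, G.dist u v = i → M u v = c) :
    ip M (distMatrix G i) = c * ip (distMatrix G i) (distMatrix G i) := by
  have htrace : (M * distMatrix G i).trace = c * (distMatrix G i * distMatrix G i).trace := by
    simp only [trace_mul_distMatrix, Finset.mul_sum]
    refine Finset.sum_congr rfl fun u _ => Finset.sum_congr rfl fun v _ => ?_
    split_ifs with h
    · simp [distMatrix, h, hM u v h]
    · rw [mul_zero]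
  rw [ip, ip, htrace, mul_left_comm]

lemma ip_distMatrix_self_pos {i : ℕ} (h : ∃ u v, G.dist u v = i) :
    0 < ip (distMatrix G i) (distMatrix G i) := by
  obtain ⟨u, v, huv⟩ := h
  have hn : (0 : ℝ) < n := Nat.cast_pos.mpr (Fin.pos u)
  have hsum : 0 < ∑ u, ∑ v, if G.dist u v = i then distMatrix G i u v else 0 := by
    refine Finset.sum_pos' (fun _ _ => Finset.sum_nonneg fun _ _ => ?_)
      ⟨u, Finset.mem_univ _, Finset.sum_pos' (fun _ _ => ?_) ⟨v, Finset.mem_univ _, ?_⟩⟩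
    all_goals simp only [distMatrix, Matrix.of_apply]; split_ifs <;> norm_num
  rw [ip, trace_mul_distMatrix]
  positivity

end DistanceMatrices

theorem avg_shortest_dpaths_unconditional_general
    {n d : ℕ} (hn : 0 < n) (G : SimpleGraph (Fin n)) [DecidableRel G.Adj]
    (hdiam : G.diam = d)
    (H : Polynomial ℝ) (hHdeg : H.natDegree = d)
    (hH : Polynomial.aeval (G.adjMatrix ℝ) H = Matrix.of fun _ _ => (1 : ℝ))
    (pi0 : ℝ) (hlead : H.leadingCoeff = (n : ℝ) / pi0) :
    ip ((G.adjMatrix ℝ) ^ d) (distMatrix G d) / ip (distMatrix G d) (distMatrix G d)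
        = 1 / H.leadingCoeff ∧
    ip ((G.adjMatrix ℝ) ^ d) (distMatrix G d) / ip (distMatrix G d) (distMatrix G d)
        = pi0 / (n : ℝ) := by
  have hentries : ∀ u v, G.dist u v = d → (G.adjMatrix ℝ ^ d) u v = H.leadingCoeff⁻¹ := by
    rintro u v rfl
    exact G.adjMatrix_pow_dist_apply_of_aeval_eq_allOnes hHdeg hH
  have hnorm : 0 < ip (distMatrix G d) (distMatrix G d) := by
    have : Nonempty (Fin n) := ⟨⟨0, hn⟩⟩
    exact ip_distMatrix_self_pos G (hdiam ▸ G.exists_dist_eq_diam)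
  have key : ip ((G.adjMatrix ℝ) ^ d) (distMatrix G d) / ip (distMatrix G d) (distMatrix G d)
      = 1 / H.leadingCoeff := by
    rw [ip_distMatrix_of_apply_eq G hentries, mul_div_cancel_right₀ _ hnorm.ne', one_div]
  exact ⟨key, by rw [key, hlead, one_div_div]⟩

/-- For a graph with `D = d`, the average number of shortest `d`-paths between vertices at
distance `d` satisfies `ā_d^{(d)} = 1/ω_d = π_0/n` unconditionally, where
`ω_d = n/π_0` is the leading coefficient of the Hoffman polynomial `H` (with `H(A) = J`). -/
theorem avg_shortest_dpaths_unconditional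
    {n d : ℕ} (hn : 0 < n) (G : SimpleGraph (Fin n)) [DecidableRel G.Adj]
    (hconn : G.Connected) (δ : ℕ) (hreg : G.IsRegularOfDegree δ)
    (hdiam : G.diam = d) (hd : 1 ≤ d)
    (H : Polynomial ℝ) (hHdeg : H.natDegree = d)
    (hH : Polynomial.aeval (G.adjMatrix ℝ) H = Matrix.of fun _ _ => (1 : ℝ))
    (pi0 : ℝ) (hpi0 : pi0 ≠ 0) (hlead : H.leadingCoeff = (n : ℝ) / pi0) :
    ip ((G.adjMatrix ℝ) ^ d) (distMatrix G d) / ip (distMatrix G d) (distMatrix G d)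
        = 1 / H.leadingCoeff ∧
    ip ((G.adjMatrix ℝ) ^ d) (distMatrix G d) / ip (distMatrix G d) (distMatrix G d)
        = pi0 / (n : ℝ) :=
  avg_shortest_dpaths_unconditional_general hn G hdiam H hHdeg hH pi0 hlead
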